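/- Let k be a field, L a finite Galois field extension of k, and K an algebraically closed field containing L. For every integer n ≥ 0, the assignment sending an n-tuple (f_1, …, f_n) of k-algebra homomorphisms L → K to the restriction to the invariant subalgebra (L^{⊗_k n})^{Σ_n} of the k-algebra homomorphism f_1 ⊗ ⋯ ⊗ f_n : L^{⊗_k n} → K (determined on pure tensors by a_1 ⊗ ⋯ ⊗ a_n ↦ ∏_i f_i(a_i)) is invariant under permutation of the tuple, and the induced map from the quotient of (L →_{k-alg} K)^n by the permutation action of Σ_n (equivalently, from Sym^n of the set of k-algebra homomorphisms L → K) to the set of k-algebra homomorphisms (L^{⊗_k n})^{Σ_n} → K is a bijection. -/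

import Mathlib

open scoped TensorProduct
open PiTensorProduct

set_option synthInstance.maxHeartbeats 1000000
set_option maxHeartbeats 1000000

/-- For a commutative `k`-algebra `A` and a permutation `σ ∈ Σ_n`, the `k`-algebra
endomorphism of the `n`-fold tensor power `A^{⊗_k n} = ⨂[k] i : Fin n, A` permuting the
tensor factors along `σ`. -/
noncomputable def permAlgHom (k : Type*) [CommSemiring k] (A : Type*) [CommSemiring A]
    [Algebra k A] {n : ℕ} (σ : Equiv.Perm (Fin n)) :
    (⨂[k] _ : Fin n, A) →ₐ[k] (⨂[k] _ : Fin n, A) :=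
  PiTensorProduct.liftAlgHom ((PiTensorProduct.tprod k).domDomCongr σ)
    (by simp [PiTensorProduct.one_def]; rfl)
    (fun x y => by simp [MultilinearMap.domDomCongr_apply]; rfl)

/-- The subalgebra `(A^{⊗_k n})^{Σ_n}` of `Σ_n`-invariant elements of the `n`-fold tensor
power of a commutative `k`-algebra `A`. -/
noncomputable def symInvariants (k : Type*) [CommSemiring k] (A : Type*) [CommSemiring A]
    [Algebra k A] (n : ℕ) : Subalgebra k (⨂[k] _ : Fin n, A) :=
  ⨅ σ : Equiv.Perm (Fin n), AlgHom.equalizer (permAlgHom k A σ) (AlgHom.id k _)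

/-- Given an `n`-tuple `f` of `k`-algebra homomorphisms `L → K` (with `K` commutative),
the induced `k`-algebra homomorphism `f 1 ⊗ ⋯ ⊗ f n : L^{⊗_k n} → K`, determined on pure
tensors by `a₁ ⊗ ⋯ ⊗ aₙ ↦ ∏ i, f i aᵢ`. -/
noncomputable def prodAlgHom (k L K : Type*) [CommSemiring k] [CommSemiring L]
    [Algebra k L] [CommSemiring K] [Algebra k K] {n : ℕ} (f : Fin n → (L →ₐ[k] K)) :
    (⨂[k] _ : Fin n, L) →ₐ[k] K :=
  PiTensorProduct.liftAlgHom
    ((MultilinearMap.mkPiAlgebra k (Fin n) K).compLinearMap fun i => (f i).toLinearMap)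
    (by simp) (fun x y => by simp [Finset.prod_mul_distrib])

/-- The canonical map sending an `n`-tuple `f` of `k`-algebra homomorphisms `L → K` to the
restriction of `f 1 ⊗ ⋯ ⊗ f n : L^{⊗_k n} → K` to the invariant subalgebra
`(L^{⊗_k n})^{Σ_n}`. -/
noncomputable def restrictedProdAlgHom (k L K : Type*) [CommSemiring k] [CommSemiring L]
    [Algebra k L] [CommSemiring K] [Algebra k K] (n : ℕ) (f : Fin n → (L →ₐ[k] K)) :
    (symInvariants k L n) →ₐ[k] K :=
  (prodAlgHom k L K f).comp (symInvariants k L n).val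

/-!
Write `A = L^{⊗_k n}` and `S = A^{Σ_n}`. Every `k`-algebra map `A → K` is `f₁ ⊗ ⋯ ⊗ fₙ` for the
tuple of its restrictions to the tensor factors. Since `A` is finite over `k`, it is integral
over `S`; by lying over, together with `K` being algebraically closed, every map `S → K`
extends to `A`, which gives surjectivity. For injectivity up to permutation take a primitive
element `α` of `L`: the coefficients of `∏ᵢ (X - αᵢ)`, where `αᵢ = 1 ⊗ ⋯ ⊗ α ⊗ ⋯ ⊗ 1`, are
`Σ_n`-invariant, so two tuples with the same restriction to `S` give the same polynomial
`∏ᵢ (X - fᵢ α)`, hence the same multiset of values at `α`. An embedding of `L` is determined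
by its value at `α`, so the two tuples agree as multisets.
-/

section Extension

variable {R S K : Type*} [CommRing R] [CommRing S] [Algebra R S] [Algebra.IsIntegral R S]
  [FaithfulSMul R S] [Field K] [IsAlgClosed K]

theorem RingHom.exists_comp_algebraMap_eq_of_isIntegral (φ : R →+* K) :
    ∃ ψ : S →+* K, ψ.comp (algebraMap R S) = φ := by
  have := RingHom.ker_isPrime φ
  obtain ⟨Q⟩ := Ideal.nonempty_primesOver (S := S) (RingHom.ker φ)
  let := (RingHom.kerLift φ).toAlgebra
  have : Module.IsTorsionFree (R ⧸ RingHom.ker φ) K :=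
    Module.isTorsionFree_iff_algebraMap_injective.mpr (RingHom.kerLift_injective φ)
  let Ψ : S ⧸ Q.1 →ₐ[R ⧸ RingHom.ker φ] K := IsAlgClosed.lift
  refine ⟨Ψ.toRingHom.comp (Ideal.Quotient.mk Q.1), RingHom.ext fun r => ?_⟩
  exact Ψ.commutes (Ideal.Quotient.mk _ r)

theorem AlgHom.exists_comp_toAlgHom_eq_of_isIntegral {k : Type*} [CommRing k] [Algebra k R]
    [Algebra k S] [IsScalarTower k R S] [Algebra k K] (φ : R →ₐ[k] K) :
    ∃ ψ : S →ₐ[k] K, ψ.comp (IsScalarTower.toAlgHom k R S) = φ := by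
  obtain ⟨ψ, hψ⟩ := RingHom.exists_comp_algebraMap_eq_of_isIntegral (S := S) φ.toRingHom
  refine ⟨{ ψ with commutes' := fun c => ?_ }, AlgHom.ext fun r => congr($hψ r)⟩
  simpa [IsScalarTower.algebraMap_apply k R S] using congr($hψ (algebraMap k R c))

end Extension

open Polynomial in
theorem Multiset.map_univ_eq_of_prod_X_sub_C_eq {ι K : Type*} [Fintype ι] [CommRing K]
    [IsDomain K] {u v : ι → K} (h : ∏ i, (X - C (u i)) = ∏ i, (X - C (v i))) :
    Finset.univ.val.map u = Finset.univ.val.map v := by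
  have roots_eq (w : ι → K) : (∏ i, (X - C (w i))).roots = Finset.univ.val.map w := by
    rw [← roots_multiset_prod_X_sub_C (Finset.univ.val.map w), Multiset.map_map]
    rfl
  rw [← roots_eq, ← roots_eq, h]

theorem exists_perm_comp_eq_of_map_univ_eq {ι α : Type*} [Fintype ι] {f g : ι → α}
    (h : Finset.univ.val.map f = Finset.univ.val.map g) : ∃ σ : Equiv.Perm ι, f ∘ σ = g := by
  classical
  have hcard (c : α) : Fintype.card {i // g i = c} = Fintype.card {i // f i = c} := by
    simpa [Fintype.card_subtype, Multiset.count_map, eq_comm, Finset.card, Finset.filter_val]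
      using congrArg (Multiset.count c) h.symm
  exact ⟨Equiv.ofFiberEquiv fun c => Fintype.equivOfCardEq (hcard c),
    funext (Equiv.ofFiberEquiv_map _)⟩

section CommSemiring

variable {k L K : Type*} [CommSemiring k] [CommSemiring L] [Algebra k L]
  [CommSemiring K] [Algebra k K] {n : ℕ}

theorem prodAlgHom_tprod (f : Fin n → (L →ₐ[k] K)) (a : Fin n → L) :
    prodAlgHom k L K f (tprod k a) = ∏ i, f i (a i) :=
  (lift.tprod a).trans (by simp)

theorem prodAlgHom_comp_singleAlgHom (f : Fin n → (L →ₐ[k] K)) (i : Fin n) :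
    (prodAlgHom k L K f).comp (singleAlgHom (R := k) (A := fun _ : Fin n => L) i) = f i := by
  ext a
  rw [AlgHom.comp_apply, singleAlgHom_apply, prodAlgHom_tprod, Finset.prod_eq_single i]
  · simp
  · intro j _ hj
    simp [hj]
  · simp

theorem prodAlgHom_surjective :
    Function.Surjective (prodAlgHom k L K : (Fin n → (L →ₐ[k] K)) → _) := fun ψ =>
  ⟨fun i => ψ.comp (singleAlgHom (R := k) (A := fun _ : Fin n => L) i),
    algHom_ext fun i => prodAlgHom_comp_singleAlgHom _ i⟩

theorem permAlgHom_comp_singleAlgHom (σ : Equiv.Perm (Fin n)) (i : Fin n) :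
    (permAlgHom k L σ).comp (singleAlgHom (R := k) (A := fun _ : Fin n => L) i) =
      singleAlgHom (R := k) (A := fun _ : Fin n => L) (σ⁻¹ i) := by
  ext a
  simp only [permAlgHom, AlgHom.comp_apply, singleAlgHom_apply, liftAlgHom_apply, lift.tprod,
    MultilinearMap.domDomCongr_apply]
  congr 1
  ext j
  simp [MonoidHom.mulSingle_apply, Pi.mulSingle_apply, Equiv.eq_symm_apply]

theorem prodAlgHom_comp_perm (f : Fin n → (L →ₐ[k] K)) (σ : Equiv.Perm (Fin n)) :
    prodAlgHom k L K (f ∘ σ) = (prodAlgHom k L K f).comp (permAlgHom k L σ⁻¹) :=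
  algHom_ext fun i => by
    rw [AlgHom.comp_assoc, permAlgHom_comp_singleAlgHom, prodAlgHom_comp_singleAlgHom,
      prodAlgHom_comp_singleAlgHom, inv_inv, Function.comp_apply]

theorem mem_symInvariants {x : ⨂[k] _ : Fin n, L} :
    x ∈ symInvariants k L n ↔ ∀ σ : Equiv.Perm (Fin n), permAlgHom k L σ x = x := by
  simp [symInvariants]

theorem restrictedProdAlgHom_comp_perm (f : Fin n → (L →ₐ[k] K)) (σ : Equiv.Perm (Fin n)) :
    restrictedProdAlgHom k L K n (f ∘ σ) = restrictedProdAlgHom k L K n f := by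
  ext ⟨x, hx⟩
  simp only [restrictedProdAlgHom, prodAlgHom_comp_perm, AlgHom.comp_apply, Subalgebra.coe_val,
    mem_symInvariants.mp hx σ⁻¹]

end CommSemiring

theorem restrictedProdAlgHom_surjective {k L K : Type*} [CommRing k] [CommRing L] [Algebra k L]
    [Module.Finite k L] [Field K] [IsAlgClosed K] [Algebra k K] (n : ℕ) :
    Function.Surjective (restrictedProdAlgHom k L K n) := by
  intro φ
  have : Algebra.IsIntegral (symInvariants k L n) (⨂[k] _ : Fin n, L) :=
    Algebra.IsIntegral.tower_top k
  obtain ⟨ψ, rfl⟩ := AlgHom.exists_comp_toAlgHom_eq_of_isIntegral (S := ⨂[k] _ : Fin n, L) φ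
  obtain ⟨f, rfl⟩ := prodAlgHom_surjective ψ
  exact ⟨f, rfl⟩

section Injectivity

open Polynomial

variable {k L K : Type*} [CommRing k] [CommRing L] [Algebra k L] {n : ℕ}

theorem coeff_prod_X_sub_C_singleAlgHom_mem_symInvariants (a : L) (j : ℕ) :
    (∏ i : Fin n, (X - C (singleAlgHom (R := k) (A := fun _ : Fin n => L) i a))).coeff j ∈
      symInvariants k L n := by
  refine mem_symInvariants.mpr fun σ => ?_
  rw [← AlgHom.coe_toRingHom, ← coeff_map, Polynomial.map_prod]
  simp only [Polynomial.map_sub, map_X, map_C, RingHom.coe_coe, ← AlgHom.comp_apply,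
    permAlgHom_comp_singleAlgHom]
  rw [Equiv.prod_comp σ⁻¹ fun i => X - C (singleAlgHom (R := k) (A := fun _ : Fin n => L) i a)]

variable [CommRing K] [Algebra k K]

theorem map_prodAlgHom_prod_X_sub_C_singleAlgHom (f : Fin n → (L →ₐ[k] K)) (a : L) :
    (∏ i : Fin n, (X - C (singleAlgHom (R := k) (A := fun _ : Fin n => L) i a))).map
      (prodAlgHom k L K f) = ∏ i, (X - C (f i a)) := by
  simp only [Polynomial.map_prod, Polynomial.map_sub, map_X, map_C, RingHom.coe_coe,
    ← AlgHom.comp_apply, prodAlgHom_comp_singleAlgHom]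

theorem prod_X_sub_C_eq_of_restrictedProdAlgHom_eq {f g : Fin n → (L →ₐ[k] K)}
    (h : restrictedProdAlgHom k L K n f = restrictedProdAlgHom k L K n g) (a : L) :
    ∏ i, (X - C (f i a)) = ∏ i, (X - C (g i a)) := by
  rw [← map_prodAlgHom_prod_X_sub_C_singleAlgHom f, ← map_prodAlgHom_prod_X_sub_C_singleAlgHom g]
  ext j
  rw [coeff_map, coeff_map]
  exact congr($h ⟨_, coeff_prod_X_sub_C_singleAlgHom_mem_symInvariants a j⟩)

end Injectivity

theorem exists_perm_comp_eq_of_restrictedProdAlgHom_eq {k L K : Type*} [Field k] [Field L]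
    [Algebra k L] [FiniteDimensional k L] [Algebra.IsSeparable k L] [CommRing K] [IsDomain K]
    [Algebra k K] {n : ℕ} {f g : Fin n → (L →ₐ[k] K)}
    (h : restrictedProdAlgHom k L K n f = restrictedProdAlgHom k L K n g) :
    ∃ σ : Equiv.Perm (Fin n), f ∘ σ = g := by
  obtain ⟨α, hα⟩ := Field.exists_primitive_element k L
  have eval_injective : Function.Injective fun φ : L →ₐ[k] K => φ α := fun φ ψ hφψ =>
    AlgHom.ext_of_adjoin_eq_top
      (Algebra.adjoin_eq_top_of_primitive_element (Algebra.IsAlgebraic.isAlgebraic α) hα)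
      (by simpa using hφψ)
  refine exists_perm_comp_eq_of_map_univ_eq (Multiset.map_injective eval_injective ?_)
  simpa only [Multiset.map_map, Function.comp_def] using
    Multiset.map_univ_eq_of_prod_X_sub_C_eq (prod_X_sub_C_eq_of_restrictedProdAlgHom_eq h α)

theorem restrictedProdAlgHom_bijective_on_sym_general (k L K : Type*) [Field k] [Field L]
    [Algebra k L] [IsGalois k L] [FiniteDimensional k L]
    [Field K] [IsAlgClosed K] [Algebra k K] (n : ℕ) :
    (∀ (f : Fin n → (L →ₐ[k] K)) (a : Fin n → L),
        prodAlgHom k L K f (PiTensorProduct.tprod k a) = ∏ i, f i (a i)) ∧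
    (∀ (f : Fin n → (L →ₐ[k] K)) (σ : Equiv.Perm (Fin n)),
        restrictedProdAlgHom k L K n (f ∘ σ) = restrictedProdAlgHom k L K n f) ∧
    Function.Surjective (restrictedProdAlgHom k L K n) ∧
    (∀ f g : Fin n → (L →ₐ[k] K),
        restrictedProdAlgHom k L K n f = restrictedProdAlgHom k L K n g →
          ∃ σ : Equiv.Perm (Fin n), f ∘ σ = g) :=
  ⟨prodAlgHom_tprod, restrictedProdAlgHom_comp_perm, restrictedProdAlgHom_surjective n,
    fun _ _ => exists_perm_comp_eq_of_restrictedProdAlgHom_eq⟩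

/-- Let `L/k` be a finite Galois extension and `K` an algebraically closed field containing
`L` (compatibly with `k ⊆ L ⊆ K`). For every `n ≥ 0`: the homomorphism `f 1 ⊗ ⋯ ⊗ f n` is
given on pure tensors by `a ↦ ∏ i, f i aᵢ`; its restriction to `(L^{⊗_k n})^{Σ_n}` is
invariant under permutation of the tuple `f`; and the induced map from the quotient of
`(L →ₐ[k] K)^n` by the permutation action of `Σ_n` (i.e. from `Sym^n (L →ₐ[k] K)`) to
`((L^{⊗_k n})^{Σ_n}) →ₐ[k] K` is a bijection (it is surjective, and two tuples have the
same image iff they differ by a permutation). -/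
theorem restrictedProdAlgHom_bijective_on_sym (k L K : Type*) [Field k] [Field L]
    [Algebra k L] [IsGalois k L] [FiniteDimensional k L]
    [Field K] [IsAlgClosed K] [Algebra k K] [Algebra L K] [IsScalarTower k L K] (n : ℕ) :
    (∀ (f : Fin n → (L →ₐ[k] K)) (a : Fin n → L),
        prodAlgHom k L K f (PiTensorProduct.tprod k a) = ∏ i, f i (a i)) ∧
    (∀ (f : Fin n → (L →ₐ[k] K)) (σ : Equiv.Perm (Fin n)),
        restrictedProdAlgHom k L K n (f ∘ σ) = restrictedProdAlgHom k L K n f) ∧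
    Function.Surjective (restrictedProdAlgHom k L K n) ∧
    (∀ f g : Fin n → (L →ₐ[k] K),
        restrictedProdAlgHom k L K n f = restrictedProdAlgHom k L K n g →
          ∃ σ : Equiv.Perm (Fin n), f ∘ σ = g) :=
  restrictedProdAlgHom_bijective_on_sym_general k L K n
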